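/- (Sufficiency of the complementary-slackness conditions.) Let {(q_i, ρ_i)}_{i=1}^N be an ensemble of qubit states. Suppose there exist a 2×2 complex Hermitian matrix K, real numbers r_i ≥ 0, qubit states σ_i, and an N-outcome POVM (M_i)_{i=1}^N such that K = q_i ρ_i + r_i σ_i for every i and r_i · Re(tr(σ_i M_i)) = 0 for every i. Then (M_i) is an optimal POVM and p_guess = ∑_i q_i Re(tr(ρ_i M_i)) = Re(tr K). -/

import Mathlib

open Matrix
open scoped ComplexOrder

noncomputable section

/-- The Pauli matrix σ_X. -/
def sigmaX : Matrix (Fin 2) (Fin 2) ℂ := !![0, 1; 1, 0]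

/-- The Pauli matrix σ_Y. -/
def sigmaY : Matrix (Fin 2) (Fin 2) ℂ := !![0, -Complex.I; Complex.I, 0]

/-- The Pauli matrix σ_Z. -/
def sigmaZ : Matrix (Fin 2) (Fin 2) ℂ := !![1, 0; 0, -1]

/-- `v · σ = v₁ σ_X + v₂ σ_Y + v₃ σ_Z` for a vector `v ∈ ℝ³`. -/
def pauliDot (v : EuclideanSpace ℝ (Fin 3)) : Matrix (Fin 2) (Fin 2) ℂ :=
  (v 0 : ℂ) • sigmaX + (v 1 : ℂ) • sigmaY + (v 2 : ℂ) • sigmaZ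

/-- A qubit state: a 2×2 complex positive semidefinite matrix with trace 1. -/
def IsQubitState (ρ : Matrix (Fin 2) (Fin 2) ℂ) : Prop :=
  ρ.PosSemidef ∧ ρ.trace = 1

/-- An `N`-outcome POVM: positive semidefinite matrices summing to the identity. -/
def IsPOVM {N : ℕ} (M : Fin N → Matrix (Fin 2) (Fin 2) ℂ) : Prop :=
  (∀ i, (M i).PosSemidef) ∧ ∑ i, M i = 1

/-- The guessing probability of the ensemble `{(q i, ρ i)}`:
the supremum over all `N`-outcome POVMs of `∑ i, q i · Re (tr (ρ i * M i))`. -/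
def pGuess {N : ℕ} (q : Fin N → ℝ) (ρ : Fin N → Matrix (Fin 2) (Fin 2) ℂ) : ℝ :=
  sSup {x : ℝ | ∃ M : Fin N → Matrix (Fin 2) (Fin 2) ℂ,
    IsPOVM M ∧ x = ∑ i, q i * ((ρ i * M i).trace).re}

/-- A POVM is optimal when it attains the guessing probability. -/
def IsOptimalPOVM {N : ℕ} (q : Fin N → ℝ) (ρ M : Fin N → Matrix (Fin 2) (Fin 2) ℂ) : Prop :=
  IsPOVM M ∧ ∑ i, q i * ((ρ i * M i).trace).re = pGuess q ρ

/-! Weak duality: pairing `K = q i • ρ i + r i • σ i` with any POVM shows that its success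
probability is `Re (tr K)` minus the slack `∑ i, r i * Re (tr (σ i * M i))`, which is nonnegative
because a trace of a product of positive semidefinite matrices is nonnegative. Complementary
slackness makes the slack of `M` vanish, so `M` attains the upper bound `Re (tr K)`. -/

open Finset

theorem Matrix.PosSemidef.trace_mul_nonneg {𝕜 n : Type*} [RCLike 𝕜] [Fintype n]
    {A B : Matrix n n 𝕜} (hA : A.PosSemidef) (hB : B.PosSemidef) : 0 ≤ (A * B).trace := by
  classical
  open scoped MatrixOrder in
  obtain ⟨C, rfl⟩ := CStarAlgebra.nonneg_iff_eq_star_mul_self.mp hB.nonneg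
  rw [star_eq_conjTranspose, ← mul_assoc, trace_mul_cycle]
  exact (hA.mul_mul_conjTranspose_same C).trace_nonneg

def successProb {N : ℕ} (q : Fin N → ℝ) (ρ M : Fin N → Matrix (Fin 2) (Fin 2) ℂ) : ℝ :=
  ∑ i, q i * ((ρ i * M i).trace).re

section Duality

variable {N : ℕ} {q r : Fin N → ℝ} {ρ σ M : Fin N → Matrix (Fin 2) (Fin 2) ℂ}
  {K : Matrix (Fin 2) (Fin 2) ℂ}

theorem pGuess_eq_of_forall_le_of_eq {b : ℝ} (hle : ∀ M, IsPOVM M → successProb q ρ M ≤ b)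
    (hM : IsPOVM M) (hb : successProb q ρ M = b) : pGuess q ρ = b :=
  IsGreatest.csSup_eq ⟨⟨M, hM, hb.symm⟩, by rintro _ ⟨M', hM', rfl⟩; exact hle M' hM'⟩

theorem successProb_eq_re_trace_sub (hKeq : ∀ i, K = q i • ρ i + r i • σ i) (hM : IsPOVM M) :
    successProb q ρ M = K.trace.re - ∑ i, r i * ((σ i * M i).trace).re := by
  have hpair : ∀ i, ((K * M i).trace).re =
      q i * ((ρ i * M i).trace).re + r i * ((σ i * M i).trace).re := fun i => by
    rw [hKeq i, add_mul, smul_mul_assoc, smul_mul_assoc, trace_add, trace_smul, trace_smul,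
      Complex.add_re, Complex.smul_re, Complex.smul_re, smul_eq_mul, smul_eq_mul]
  have htotal : ∑ i, ((K * M i).trace).re = K.trace.re := by
    rw [← Complex.re_sum, ← trace_sum, ← mul_sum, hM.2, mul_one]
  rw [successProb, eq_sub_iff_add_eq, ← sum_add_distrib, ← htotal]
  exact sum_congr rfl fun i _ => (hpair i).symm

theorem successProb_le_re_trace (hKeq : ∀ i, K = q i • ρ i + r i • σ i) (hr : ∀ i, 0 ≤ r i)
    (hσ : ∀ i, (σ i).PosSemidef) (hM : IsPOVM M) : successProb q ρ M ≤ K.trace.re := by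
  have hslack : 0 ≤ ∑ i, r i * ((σ i * M i).trace).re := sum_nonneg fun i _ =>
    mul_nonneg (hr i) (Complex.nonneg_iff.mp ((hσ i).trace_mul_nonneg (hM.1 i))).1
  linarith [successProb_eq_re_trace_sub hKeq hM]

end Duality

theorem slackness_sufficient_general {N : ℕ} (q : Fin N → ℝ)
    (ρ σ M : Fin N → Matrix (Fin 2) (Fin 2) ℂ)
    (K : Matrix (Fin 2) (Fin 2) ℂ) (r : Fin N → ℝ)
    (hr : ∀ i, 0 ≤ r i)
    (hσ : ∀ i, IsQubitState (σ i))
    (hM : IsPOVM M)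
    (hKeq : ∀ i, K = q i • ρ i + r i • σ i)
    (hslack : ∀ i, r i * ((σ i * M i).trace).re = 0) :
    IsOptimalPOVM q ρ M ∧ pGuess q ρ = K.trace.re := by
  have hattain : successProb q ρ M = K.trace.re := by
    simp only [successProb_eq_re_trace_sub hKeq hM, hslack, sum_const_zero, sub_zero]
  have hpGuess : pGuess q ρ = K.trace.re :=
    pGuess_eq_of_forall_le_of_eq (fun _ hM' => successProb_le_re_trace hKeq hr (fun i => (hσ i).1) hM')
      hM hattain
  exact ⟨⟨hM, hattain.trans hpGuess.symm⟩, hpGuess⟩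

/-- Sufficiency of the complementary-slackness conditions. -/
theorem slackness_sufficient {N : ℕ} (q : Fin N → ℝ)
    (ρ σ M : Fin N → Matrix (Fin 2) (Fin 2) ℂ)
    (K : Matrix (Fin 2) (Fin 2) ℂ) (r : Fin N → ℝ)
    (hq : ∀ i, 0 < q i) (hqsum : ∑ i, q i = 1)
    (hρ : ∀ i, IsQubitState (ρ i))
    (hK : K.IsHermitian) (hr : ∀ i, 0 ≤ r i)
    (hσ : ∀ i, IsQubitState (σ i))
    (hM : IsPOVM M)
    (hKeq : ∀ i, K = q i • ρ i + r i • σ i)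
    (hslack : ∀ i, r i * ((σ i * M i).trace).re = 0) :
    IsOptimalPOVM q ρ M ∧ pGuess q ρ = K.trace.re :=
  slackness_sufficient_general q ρ σ M K r hr hσ hM hKeq hslack

end
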